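/- arXiv:2103.14911 — 6 statements merged into one kernel-verified Lean document; each statement's English description precedes it below -/
import Mathlib

section
/- Let G be a subgroup of the group of homeomorphisms of the real line (or of [0,1]) and let X be a compact subset of the support of G (the set of points moved by some element of G). Then there exists g ∈ G such that for every nonzero integer k, the image of X under g^k is disjoint from X. -/
/-!
If `[u, v]` contains no global fixed point of `G`, some `g ∈ G` pushes `u` beyond `v`: otherwise
the supremum of the orbit of `u` would be such a fixed point. Given finitely many such intervals,
induct on their number: take `h` pushing the first interval off itself, use the induction
hypothesis for the other intervals enlarged by their `h⁻¹`-images (still free of global fixed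
points), and compose to get `c` which displaces the first interval and has no fixed point in any
of the others; by the first step applied to the cyclic group of `c`, a suitable power of `c`
displaces all of them. A compact subset of the support meets finitely many components of the
support, each `G`-invariant, and the part in each component lies in a closed interval inside it.
-/

open Set Equiv

def supt {α : Type*} (G : Subgroup (Perm α)) : Set α := {x | ∃ g ∈ G, g x ≠ x}

lemma apply_eq_of_notMem_supt {α : Type*} {G : Subgroup (Perm α)} {g : Perm α} {x : α}
    (hx : x ∉ supt G) (hg : g ∈ G) : g x = x :=
  not_not.1 fun hne => hx ⟨g, hg, hne⟩

section LinearOrder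

variable {α : Type*} [LinearOrder α] {G : Subgroup (Perm α)} {g h f : Perm α} {u v w x : α}

lemma strictMono_of_mem (hmono : ∀ g ∈ G, Monotone g) (hg : g ∈ G) : StrictMono g :=
  (hmono g hg).strictMono_of_injective g.injective

/-- For monotone `g` and `u ≤ v`, this says exactly that `g '' Icc u v` is disjoint from
`Icc u v`. -/
def Displaces (g : Perm α) (u v : α) : Prop := v < g u ∨ g v < u

lemma Displaces.apply_notMem_Icc (hg : Monotone g) (h : Displaces g u v) (hx : x ∈ Icc u v) :
    g x ∉ Icc u v := by
  rintro ⟨h₁, h₂⟩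
  rcases h with h | h
  · exact (h.trans_le (hg hx.1)).not_ge h₂
  · exact ((hg hx.2).trans_lt h).not_ge h₁

lemma Displaces.inv (hg : StrictMono g) (h : Displaces g u v) : Displaces g⁻¹ u v := by
  rcases h with h | h
  · exact Or.inr (hg.lt_iff_lt.1 (by simpa using h))
  · exact Or.inl (hg.lt_iff_lt.1 (by simpa using h))

lemma Displaces.pow (hg : Monotone g) (huv : u ≤ v) (h : Displaces g u v) {n : ℕ} (hn : n ≠ 0) :
    Displaces (g ^ n) u v := by
  obtain ⟨n, rfl⟩ := Nat.exists_eq_add_one_of_ne_zero hn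
  clear hn
  rcases h with h | h
  · refine Or.inl ?_
    induction n with
    | zero => simpa using h
    | succ n ih => rw [pow_succ', Perm.mul_apply]; exact h.trans_le (hg (huv.trans ih.le))
  · refine Or.inr ?_
    induction n with
    | zero => simpa using h
    | succ n ih => rw [pow_succ', Perm.mul_apply]; exact (hg (ih.le.trans huv)).trans_lt h

lemma Displaces.zpow (hmono : ∀ g ∈ G, Monotone g) (hg : g ∈ G) (huv : u ≤ v)
    (h : Displaces g u v) {k : ℤ} (hk : k ≠ 0) : Displaces (g ^ k) u v := by
  have hpow := h.pow (hmono g hg) huv (Int.natAbs_ne_zero.2 hk)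
  rcases Int.natAbs_eq k with hk' | hk' <;> rw [hk']
  · rw [zpow_natCast]
    exact hpow
  · rw [zpow_neg, zpow_natCast]
    exact hpow.inv (strictMono_of_mem hmono (pow_mem hg _))

lemma exists_common_zpow_displaces {ι : Type*} [DecidableEq ι] (hmono : ∀ g ∈ G, Monotone g)
    {c : Perm α} (hc : c ∈ G) (s : Finset ι) (u v : ι → α)
    (hs : ∀ i ∈ s, u i ≤ v i ∧ ∃ k : ℤ, k ≠ 0 ∧ Displaces (c ^ k) (u i) (v i)) :
    ∃ N : ℤ, N ≠ 0 ∧ ∀ i ∈ s, Displaces (c ^ N) (u i) (v i) := by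
  induction s using Finset.induction_on with
  | empty => exact ⟨1, one_ne_zero, by simp⟩
  | insert i s _ ih =>
    obtain ⟨hle, k, hk, hck⟩ := hs i (Finset.mem_insert_self i s)
    obtain ⟨N, hN, hcN⟩ := ih fun j hj => hs j (Finset.mem_insert_of_mem hj)
    refine ⟨k * N, mul_ne_zero hk hN, fun j hj => ?_⟩
    rcases Finset.mem_insert.1 hj with rfl | hj
    · rw [zpow_mul]
      exact hck.zpow hmono (zpow_mem hc k) hle hN
    · rw [mul_comm, zpow_mul]
      exact (hcN j hj).zpow hmono (zpow_mem hc N) (hs j (Finset.mem_insert_of_mem hj)).1 hk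

lemma Icc_min_max_inv_subset_supt (hmono : ∀ g ∈ G, Monotone g) (hh : h ∈ G)
    (huv : Icc u v ⊆ supt G) : Icc (min u (h⁻¹ u)) (max v (h⁻¹ v)) ⊆ supt G := by
  intro w hw
  by_contra hws
  have hsm := strictMono_of_mem hmono (inv_mem hh)
  have hfix : h⁻¹ w = w := apply_eq_of_notMem_supt hws (inv_mem hh)
  have hlt₁ : w < u → w < h⁻¹ u := fun hwu => hfix ▸ hsm hwu
  have hlt₂ : v < w → h⁻¹ v < w := fun hvw => hfix ▸ hsm hvw
  simp only [mem_Icc, min_le_iff, le_max_iff] at hw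
  refine hws (huv ⟨not_lt.1 fun hwu => ?_, not_lt.1 fun hvw => ?_⟩)
  · have := hlt₁ hwu
    rcases hw.1 with h | h <;> order
  · have := hlt₂ hvw
    rcases hw.2 with h | h <;> order

lemma mul_apply_ne_self (hf : Monotone f) (hh : Monotone ⇑(h⁻¹))
    (hdisp : Displaces f (min u (h⁻¹ u)) (max v (h⁻¹ v))) (hw : w ∈ Icc u v) : (h * f) w ≠ w := by
  intro hfix
  have hfw : f w = h⁻¹ w := by simpa using congrArg (⇑(h⁻¹)) hfix
  refine hdisp.apply_notMem_Icc hf ⟨min_le_of_left_le hw.1, le_max_of_le_left hw.2⟩ ?_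
  rw [hfw]
  exact ⟨min_le_of_right_le (hh hw.1), le_max_of_le_right (hh hw.2)⟩

lemma uIcc_apply_subset_supt (hmono : ∀ g ∈ G, Monotone g) (hg : g ∈ G) (hx : x ∈ supt G) :
    uIcc x (g x) ⊆ supt G := by
  intro w hw
  by_contra hws
  have hsm := strictMono_of_mem hmono hg
  have hfix : g w = w := apply_eq_of_notMem_supt hws hg
  have hne : w ≠ x := fun h => hws (h ▸ hx)
  rw [mem_uIcc] at hw
  rcases hne.lt_or_gt with h | h
  · have : w < g x := hfix ▸ hsm h
    rcases hw with hw | hw <;> order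
  · have : g x < w := hfix ▸ hsm h
    rcases hw with hw | hw <;> order

end LinearOrder

section ConditionallyCompleteLinearOrder

variable {α : Type*} [ConditionallyCompleteLinearOrder α] {G : Subgroup (Perm α)} {c : Perm α}
  {u v : α}

theorem exists_lt_apply_of_Icc_subset_supt (hmono : ∀ g ∈ G, Monotone g)
    (hsub : Icc u v ⊆ supt G) : ∃ g ∈ G, v < g u := by
  by_contra! hle
  have hbdd : BddAbove (range fun g : G => (g : Perm α) u) :=
    ⟨v, forall_mem_range.2 fun g => hle g g.2⟩
  set s := ⨆ g : G, (g : Perm α) u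
  have hus : u ≤ s := by simpa using le_ciSup hbdd (1 : G)
  have hsv : s ≤ v := ciSup_le fun g => hle g g.2
  have hnot : ∀ g ∈ G, ¬ g s < s := by
    intro g hg hlt
    obtain ⟨g', hg'⟩ := exists_lt_of_lt_ciSup hlt
    have : s < (g⁻¹ * g') u := by simpa using strictMono_of_mem hmono (inv_mem hg) hg'
    exact this.not_ge (le_ciSup hbdd ⟨g⁻¹ * g', mul_mem (inv_mem hg) g'.2⟩)
  obtain ⟨g, hg, hgs⟩ := hsub ⟨hus, hsv⟩
  rcases hgs.lt_or_gt with hlt | hgt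
  · exact hnot g hg hlt
  · exact hnot g⁻¹ (inv_mem hg) (by simpa using strictMono_of_mem hmono (inv_mem hg) hgt)

lemma exists_zpow_displaces (hmono : ∀ g ∈ G, Monotone g) (hc : c ∈ G) (huv : u ≤ v)
    (hfree : ∀ w ∈ Icc u v, c w ≠ w) : ∃ k : ℤ, k ≠ 0 ∧ Displaces (c ^ k) u v := by
  obtain ⟨g, hg, hvg⟩ := exists_lt_apply_of_Icc_subset_supt (G := Subgroup.zpowers c)
    (fun g hg => hmono g (Subgroup.zpowers_le.2 hc hg))
    fun w hw => ⟨c, Subgroup.mem_zpowers c, hfree w hw⟩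
  obtain ⟨k, rfl⟩ := Subgroup.mem_zpowers_iff.1 hg
  refine ⟨k, ?_, Or.inl hvg⟩
  rintro rfl
  exact hvg.not_ge (by simpa using huv)

theorem exists_displaces_of_Icc_subset_supt {ι : Type*} [DecidableEq ι]
    (hmono : ∀ g ∈ G, Monotone g) (s : Finset ι) (u v : ι → α)
    (hs : ∀ i ∈ s, u i ≤ v i ∧ Icc (u i) (v i) ⊆ supt G) :
    ∃ g ∈ G, ∀ i ∈ s, Displaces g (u i) (v i) := by
  induction s using Finset.induction_on generalizing u v with
  | empty => exact ⟨1, one_mem G, by simp⟩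
  | insert i s _ ih =>
    obtain ⟨hle, hsub⟩ := hs i (Finset.mem_insert_self i s)
    have hs' : ∀ j ∈ s, u j ≤ v j ∧ Icc (u j) (v j) ⊆ supt G :=
      fun j hj => hs j (Finset.mem_insert_of_mem hj)
    obtain ⟨h, hh, hhi⟩ := exists_lt_apply_of_Icc_subset_supt hmono hsub
    obtain ⟨e, he, hes⟩ := ih (fun j => min (u j) (h⁻¹ (u j))) (fun j => max (v j) (h⁻¹ (v j)))
      fun j hj => ⟨min_le_of_left_le ((hs' j hj).1.trans (le_max_left _ _)),
        Icc_min_max_inv_subset_supt hmono hh (hs' j hj).2⟩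
    obtain ⟨f, hf, hfi, hfs⟩ : ∃ f ∈ G, u i ≤ f (u i) ∧
        ∀ j ∈ s, Displaces f (min (u j) (h⁻¹ (u j))) (max (v j) (h⁻¹ (v j))) := by
      rcases le_total (u i) (e (u i)) with hei | hei
      · exact ⟨e, he, hei, hes⟩
      · exact ⟨e⁻¹, inv_mem he, by simpa using hmono _ (inv_mem he) hei,
          fun j hj => (hes j hj).inv (strictMono_of_mem hmono he)⟩
    have hc : h * f ∈ G := mul_mem hh hf
    have hpow : ∀ j ∈ insert i s,
        u j ≤ v j ∧ ∃ k : ℤ, k ≠ 0 ∧ Displaces ((h * f) ^ k) (u j) (v j) := by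
      intro j hj
      rcases Finset.mem_insert.1 hj with rfl | hj
      · exact ⟨hle, 1, one_ne_zero, Or.inl (by simpa using hhi.trans_le (hmono h hh hfi))⟩
      · exact ⟨(hs' j hj).1, exists_zpow_displaces hmono hc (hs' j hj).1 fun w hw =>
          mul_apply_ne_self (hmono f hf) (hmono _ (inv_mem hh)) (hfs j hj) hw⟩
    obtain ⟨N, -, hcN⟩ := exists_common_zpow_displaces hmono hc (insert i s) u v hpow
    exact ⟨(h * f) ^ N, zpow_mem hc N, hcN⟩

end ConditionallyCompleteLinearOrder

lemma isOpen_supt {α : Type*} [TopologicalSpace α] [T2Space α] {G : Subgroup (Perm α)}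
    (hcont : ∀ g ∈ G, Continuous g) : IsOpen (supt G) := by
  have : supt G = ⋃ g ∈ G, {x | g x ≠ x} := by ext; simp [supt]
  rw [this]
  exact isOpen_biUnion fun g hg => isOpen_ne_fun (hcont g hg) continuous_id

lemma closure_connectedComponentIn_inter_subset {α : Type*} [TopologicalSpace α] {F : Set α}
    {x : α} : closure (connectedComponentIn F x) ∩ F ⊆ connectedComponentIn F x := by
  rintro y ⟨hy, hyF⟩
  have hxF : x ∈ F := by
    by_contra hxF
    simp [connectedComponentIn_eq_empty hxF] at hy
  have hpre : IsPreconnected (insert y (connectedComponentIn F x)) :=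
    isPreconnected_connectedComponentIn.subset_closure (subset_insert _ _)
      (insert_subset hy subset_closure)
  exact hpre.subset_connectedComponentIn (mem_insert_of_mem _ (mem_connectedComponentIn hxF))
    (insert_subset hyF (connectedComponentIn_subset _ _)) (mem_insert y _)

lemma IsCompact.inter_connectedComponentIn {α : Type*} [TopologicalSpace α] {K F : Set α}
    (hK : IsCompact K) (hKF : K ⊆ F) (x : α) : IsCompact (K ∩ connectedComponentIn F x) := by
  have : K ∩ connectedComponentIn F x = K ∩ closure (connectedComponentIn F x) :=
    Subset.antisymm (inter_subset_inter_right _ subset_closure) fun y hy =>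
      ⟨hy.1, closure_connectedComponentIn_inter_subset ⟨hy.2, hKF hy.1⟩⟩
  rw [this]
  exact hK.inter_right isClosed_closure

lemma IsCompact.exists_Icc_subset_of_isPreconnected {α : Type*} [LinearOrder α]
    [TopologicalSpace α] [OrderClosedTopology α] {K S : Set α} (hK : IsCompact K)
    (hne : K.Nonempty) (hS : IsPreconnected S) (hKS : K ⊆ S) :
    ∃ u v, u ≤ v ∧ K ⊆ Icc u v ∧ Icc u v ⊆ S := by
  obtain ⟨u, huK, hu⟩ := hK.exists_isLeast hne
  obtain ⟨v, hvK, hv⟩ := hK.exists_isGreatest hne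
  exact ⟨u, v, hu huK |>.trans (hv huK), fun x hx => ⟨hu hx, hv hx⟩,
    hS.Icc_subset (hKS huK) (hKS hvK)⟩

section OrderTopology

variable {α : Type*} [ConditionallyCompleteLinearOrder α] [TopologicalSpace α] [OrderTopology α]
  [DenselyOrdered α] {G : Subgroup (Perm α)} {g : Perm α} {x y : α}

instance OrderTopology.locallyConnectedSpace : LocallyConnectedSpace α :=
  locallyConnectedSpace_iff_connected_subsets.2 fun _ _ hU =>
    let ⟨b, c, _, hnhds, hsub⟩ := exists_Icc_mem_subset_of_mem_nhds hU
    ⟨Icc b c, hnhds, isPreconnected_Icc, hsub⟩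

lemma apply_mem_connectedComponentIn_supt (hmono : ∀ g ∈ G, Monotone g) (hg : g ∈ G)
    (hx : x ∈ connectedComponentIn (supt G) y) : g x ∈ connectedComponentIn (supt G) y := by
  rw [connectedComponentIn_eq hx]
  exact isPreconnected_uIcc.subset_connectedComponentIn left_mem_uIcc
    (uIcc_apply_subset_supt hmono hg (connectedComponentIn_subset _ _ hx)) right_mem_uIcc

theorem exists_zpow_image_inter_eq_empty (hmono : ∀ g ∈ G, Monotone g)
    (hcont : ∀ g ∈ G, Continuous g) {X : Set α} (hX : IsCompact X) (hXsupp : X ⊆ supt G) :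
    ∃ g ∈ G, ∀ k : ℤ, k ≠ 0 → (g ^ k) '' X ∩ X = ∅ := by
  classical
  set C : X → Set α := fun x => connectedComponentIn (supt G) x
  have hxC : ∀ x : X, (x : α) ∈ C x := fun x => mem_connectedComponentIn (hXsupp x.2)
  obtain ⟨t, ht⟩ := hX.elim_finite_subcover C (fun _ => (isOpen_supt hcont).connectedComponentIn)
    fun x hx => mem_iUnion.2 ⟨⟨x, hx⟩, hxC ⟨x, hx⟩⟩
  choose u v huv hXuv huvC using fun x : X =>
    (hX.inter_connectedComponentIn hXsupp x).exists_Icc_subset_of_isPreconnected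
      ⟨x, x.2, hxC x⟩ isPreconnected_connectedComponentIn inter_subset_right
  obtain ⟨g, hg, hdisp⟩ := exists_displaces_of_Icc_subset_supt hmono t u v
    fun x _ => ⟨huv x, (huvC x).trans (connectedComponentIn_subset _ _)⟩
  refine ⟨g, hg, fun k hk => eq_empty_of_forall_notMem ?_⟩
  rintro _ ⟨⟨y, hyX, rfl⟩, hgyX⟩
  obtain ⟨x, hx, hyC⟩ := mem_iUnion₂.1 (ht hyX)
  have hgk : g ^ k ∈ G := zpow_mem hg k
  exact ((hdisp x hx).zpow hmono hg (huv x) hk).apply_notMem_Icc (hmono _ hgk) (hXuv x ⟨hyX, hyC⟩)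
    (hXuv x ⟨hgyX, apply_mem_connectedComponentIn_supt hmono hgk hyC⟩)

end OrderTopology

/-- `supt` of a set of permutations of a space: the set of points moved by some element. -/
theorem stmt0
    (G : Subgroup (Equiv.Perm (Icc (0:ℝ) 1)))
    (hG : ∀ g ∈ G, Continuous (⇑(g : Equiv.Perm (Icc (0:ℝ) 1))) ∧ Monotone ⇑g)
    (X : Set (Icc (0:ℝ) 1))
    (hX : IsCompact X)
    (hXsupp : X ⊆ {x | ∃ g ∈ G, g x ≠ x}) :
    ∃ g ∈ G, ∀ k : ℤ, k ≠ 0 → (⇑(g ^ k) '' X) ∩ X = ∅ :=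
  exists_zpow_image_inter_eq_empty (fun g hg => (hG g hg).2) (fun g hg => (hG g hg).1) hX hXsupp
end

section
/- Let A and B be subgroups of the group of orientation-preserving homeomorphisms of [0,1] such that for every a ∈ A the closure of supt(a) is contained in supt B. Then the commutator subgroup A' is contained in the subgroup generated by all commutators [[a₀,b₀],[a₁,b₁]] with a₀,a₁ ∈ A and b₀,b₁ ∈ B. (One may use the auxiliary fact that a compact subset of supt B can be moved off itself by an element of B.) -/
/-!
Write `⁅a, b⁆ = a * (b a⁻¹ b⁻¹)`; the second factor is supported on `b '' supt a`. If `b₀` moves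
`K := cl (supt a) ∪ cl (supt c)` off itself and `b₁` moves `K ∪ b₀ '' K` off itself, then
`b₀ a⁻¹ b₀⁻¹` commutes with `c` and with `b₁ c⁻¹ b₁⁻¹`, and `b₁ c⁻¹ b₁⁻¹` commutes with `a`,
which forces `⁅⁅a, b₀⁆, ⁅c, b₁⁆⁆ = ⁅a, c⁆`.

The displacing elements come from compactness. In the closure of `B` among all self-maps of the
interval (pointwise convergence), a minimal closed `B`-invariant set produces a limit map `e` with
values in the common fixed set `F` of `B`. On each component of the complement of `F`, `e` is
constant except at one jump at most; a second such limit map pushes the finitely many jumps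
lying in the components that meet `K` off `K`. Composing, we get a limit map that is locally
constant at every point of `K` with values outside `K`, and an element of `B` approximating it at
finitely many points moves `K` off itself.
-/

open Set Filter Topology MulAction Equiv
open scoped commutatorElement

section Commutator

variable {G : Type*} [Group G]

theorem commutatorElement_mul_left_of_commute {a a' y : G} (h : Commute a' y) :
    ⁅a * a', y⁆ = ⁅a, y⁆ := by
  rw [commutatorElement_def, commutatorElement_def, mul_assoc a a' y, h.eq]
  group

theorem commutatorElement_mul_right_of_commute {x c c' : G} (h : Commute c' x) :
    ⁅x, c * c'⁆ = ⁅x, c⁆ := by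
  rw [commutatorElement_def, commutatorElement_def, ← mul_assoc x c c',
    mul_assoc (x * c) c' x⁻¹, h.inv_right.eq]
  group

theorem commutatorElement_commutatorElement_eq {a c b₀ b₁ : G}
    (h₁ : Commute (b₀ * a⁻¹ * b₀⁻¹) c)
    (h₂ : Commute (b₀ * a⁻¹ * b₀⁻¹) (b₁ * c⁻¹ * b₁⁻¹))
    (h₃ : Commute (b₁ * c⁻¹ * b₁⁻¹) a) :
    ⁅⁅a, b₀⁆, ⁅c, b₁⁆⁆ = ⁅a, c⁆ := by
  have ha : ⁅a, b₀⁆ = a * (b₀ * a⁻¹ * b₀⁻¹) := by rw [commutatorElement_def]; group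
  have hc : ⁅c, b₁⁆ = c * (b₁ * c⁻¹ * b₁⁻¹) := by rw [commutatorElement_def]; group
  rw [ha, hc, commutatorElement_mul_left_of_commute (h₁.mul_right h₂),
    commutatorElement_mul_right_of_commute h₃]

end Commutator

namespace Equiv.Perm

variable {α : Type*}

theorem disjoint_of_subset {f g : Perm α} {s t : Set α} (hf : {x | f x ≠ x} ⊆ s)
    (hg : {x | g x ≠ x} ⊆ t) (hst : _root_.Disjoint s t) : f.Disjoint g := fun x => by
  by_contra! h
  exact hst.ne_of_mem (hf h.1) (hg h.2) rfl

theorem setOf_conj_inv_apply_ne_subset (b f : Perm α) :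
    {x | (b * f⁻¹ * b⁻¹) x ≠ x} ⊆ b '' {x | f x ≠ x} := by
  intro x hx
  refine ⟨b⁻¹ x, fun h => hx ?_, b.apply_symm_apply x⟩
  rw [mul_apply, mul_apply, inv_eq_iff_eq.mpr h.symm]
  exact b.apply_symm_apply x

theorem commutatorElement_commutatorElement_eq_of_disjoint {a c b₀ b₁ : Perm α} {K : Set α}
    (ha : {x | a x ≠ x} ⊆ K) (hc : {x | c x ≠ x} ⊆ K) (h₀ : _root_.Disjoint (b₀ '' K) K)
    (h₁ : _root_.Disjoint (b₁ '' (K ∪ b₀ '' K)) (K ∪ b₀ '' K)) :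
    ⁅⁅a, b₀⁆, ⁅c, b₁⁆⁆ = ⁅a, c⁆ := by
  have ha' := (setOf_conj_inv_apply_ne_subset b₀ a).trans (image_mono ha)
  have hc' := (setOf_conj_inv_apply_ne_subset b₁ c).trans (image_mono hc)
  have hKK := h₁.mono (image_mono subset_union_left) subset_union_left
  apply commutatorElement_commutatorElement_eq
  · exact (disjoint_of_subset ha' hc h₀).commute
  · exact (disjoint_of_subset ha' hc'
      (h₁.symm.mono subset_union_right (image_mono subset_union_left))).commute
  · exact (disjoint_of_subset hc' ha hKK).commute

end Equiv.Perm

section FixedPoints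

variable {α : Type*} (B : Subgroup (Perm α))

theorem Subgroup.mem_fixedPoints_iff {x : α} : x ∈ fixedPoints B α ↔ ∀ b ∈ B, b x = x := by
  simp [MulAction.mem_fixedPoints, Subgroup.smul_def, Perm.smul_def]

theorem Subgroup.notMem_fixedPoints_iff {x : α} : x ∉ fixedPoints B α ↔ ∃ b ∈ B, b x ≠ x := by
  rw [Subgroup.mem_fixedPoints_iff]
  simp only [not_forall, exists_prop]

theorem Subgroup.apply_notMem_fixedPoints {b : Perm α} (hb : b ∈ B) {x : α}
    (hx : x ∉ fixedPoints B α) : b x ∉ fixedPoints B α := by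
  rw [Subgroup.mem_fixedPoints_iff] at hx ⊢
  refine fun h => hx fun g hg => ?_
  have hbx : b x = x := by simpa [eq_comm] using h b⁻¹ (B.inv_mem hb)
  rw [← hbx, h g hg]

end FixedPoints

section Order

variable {α : Type*} [LinearOrder α] {B : Subgroup (Perm α)}

theorem apply_mem_ordConnectedComponent (hmono : ∀ b ∈ B, Monotone b) {b : Perm α} (hb : b ∈ B)
    {x : α} (hx : x ∉ fixedPoints B α) : b x ∈ ordConnectedComponent (fixedPoints B α)ᶜ x := by
  intro y hy hyF
  have hby : b y = y := (Subgroup.mem_fixedPoints_iff B).1 hyF b hb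
  have hsm := (hmono b hb).strictMono_of_injective b.injective
  have h₁ : x < y ↔ b x < y := by rw [← hsm.lt_iff_lt, hby]
  have h₂ : y < x ↔ y < b x := by rw [← hsm.lt_iff_lt, hby]
  rw [mem_uIcc] at hy
  rcases lt_trichotomy x y with h | rfl | h
  · have := h₁.1 h; rcases hy with hy | hy <;> order
  · exact hx hyF
  · have := h₂.1 h; rcases hy with hy | hy <;> order

def jumpSet (f : α → α) : Set α := {x | ∀ l < x, ∀ r, x < r → f l ≠ f r}

theorem apply_mem_jumpSet_of_mem_jumpSet_comp {f : α → α} {d : Perm α} (hd : StrictMono d)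
    {x : α} (h : x ∈ jumpSet (f ∘ d)) : d x ∈ jumpSet f := by
  intro l hl r hr
  have hl' : d.symm l < x := by rwa [← hd.lt_iff_lt, d.apply_symm_apply]
  have hr' : x < d.symm r := by rwa [← hd.lt_iff_lt, d.apply_symm_apply]
  simpa using h _ hl' _ hr'

end Order

section PointwiseClosure

variable {α : Type*} [TopologicalSpace α] (B : Subgroup (Perm α))

def pointwiseClosure : Set (α → α) :=
  closure ((fun b : Perm α => (b : α → α)) '' (B : Set (Perm α)))

variable {B}

theorem exists_mem_of_mem_pointwiseClosure {f : α → α} (hf : f ∈ pointwiseClosure B)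
    {p : (α → α) → Prop} (hp : ∀ᶠ g in 𝓝 f, p g) : ∃ b ∈ B, p b := by
  obtain ⟨_, ⟨b, hb, rfl⟩, hpb⟩ := ((mem_closure_iff_frequently.1 hf).and_eventually hp).exists
  exact ⟨b, hb, hpb⟩

theorem id_mem_pointwiseClosure : id ∈ pointwiseClosure B :=
  subset_closure ⟨1, B.one_mem, rfl⟩

theorem comp_mem_pointwiseClosure (hcont : ∀ b ∈ B, Continuous b) {b : Perm α} (hb : b ∈ B)
    {f : α → α} (hf : f ∈ pointwiseClosure B) : b ∘ f ∈ pointwiseClosure B :=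
  map_mem_closure (continuous_pi fun x => (hcont b hb).comp (continuous_apply x)) hf
    (by rintro _ ⟨c, hc, rfl⟩; exact ⟨b * c, B.mul_mem hb hc, rfl⟩)

theorem comp_perm_mem_pointwiseClosure {c : Perm α} (hc : c ∈ B) {f : α → α}
    (hf : f ∈ pointwiseClosure B) : f ∘ c ∈ pointwiseClosure B :=
  map_mem_closure (f := fun g : α → α => g ∘ c) (continuous_pi fun x => continuous_apply (c x))
    hf
    (by rintro _ ⟨b, hb, rfl⟩; exact ⟨b * c, B.mul_mem hb hc, rfl⟩)

theorem apply_eq_self_of_mem_pointwiseClosure [T2Space α] {f : α → α}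
    (hf : f ∈ pointwiseClosure B) {y : α} (hy : y ∈ fixedPoints B α) : f y = y :=
  closure_minimal (by rintro _ ⟨b, hb, rfl⟩; exact (Subgroup.mem_fixedPoints_iff B).1 hy b hb)
    (isClosed_eq (continuous_apply y) continuous_const) hf

end PointwiseClosure

section Topology

variable {α : Type*} [LinearOrder α] [TopologicalSpace α] [OrderTopology α]
  {B : Subgroup (Perm α)}

theorem Subgroup.isClosed_fixedPoints (hcont : ∀ b ∈ B, Continuous b) :
    IsClosed (fixedPoints B α) := by
  have : fixedPoints B α = ⋂ b ∈ B, {x | b x = x} := by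
    ext x; simp
  rw [this]
  exact isClosed_biInter fun b hb => isClosed_eq (hcont b hb) continuous_id

theorem IsOpen.ordConnectedComponent {s : Set α} (hs : IsOpen s) (x : α) :
    IsOpen (ordConnectedComponent s x) := by
  refine isOpen_iff_mem_nhds.2 fun y hy => ?_
  rw [ordConnectedComponent_eq hy]
  exact ordConnectedComponent_mem_nhds.2 (hs.mem_nhds (hy right_mem_uIcc))

theorem mem_Icc_of_mem_jumpSet {f : α → α} (hf : f ∈ pointwiseClosure B) {x y m : α}
    (hx : x ∈ jumpSet f) (hy : y ∈ jumpSet f) (hxm : x < m) (hmy : m < y)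
    (hm : f m ∈ fixedPoints B α) : f m ∈ Icc x y := by
  have hfix := apply_eq_self_of_mem_pointwiseClosure hf hm
  constructor
  · by_contra! h
    exact hx (f m) h m hxm hfix
  · by_contra! h
    exact hy m hmy (f m) h hfix.symm

theorem subsingleton_jumpSet_inter [DenselyOrdered α] {f : α → α} (hf : f ∈ pointwiseClosure B)
    (hfF : ∀ x, f x ∈ fixedPoints B α) {S : Set α} (hS : S.OrdConnected)
    (hSF : S ⊆ (fixedPoints B α)ᶜ) : (jumpSet f ∩ S).Subsingleton := by
  have key : ∀ x ∈ jumpSet f ∩ S, ∀ y ∈ jumpSet f ∩ S, ¬ x < y := by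
    rintro x ⟨hx, hxS⟩ y ⟨hy, hyS⟩ hxy
    obtain ⟨m, hxm, hmy⟩ := exists_between hxy
    exact hSF (hS.out hxS hyS (mem_Icc_of_mem_jumpSet hf hx hy hxm hmy (hfF m))) (hfF m)
  exact fun x hx y hy => le_antisymm (not_lt.1 (key y hy x hx)) (not_lt.1 (key x hx y hy))

variable [CompactSpace α]

/-- In a minimal nonempty closed `B`-invariant subset of `ι → α`, each coordinate is constant,
equal to its largest value on the set, and that value is fixed by `B`. -/
theorem exists_forall_mem_fixedPoints (hmono : ∀ b ∈ B, Monotone b) {ι : Type*}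
    {S : Set (ι → α)} (hS : IsClosed S) (hne : S.Nonempty)
    (hinv : ∀ b ∈ B, ∀ f ∈ S, b ∘ f ∈ S) : ∃ f ∈ S, ∀ i, f i ∈ fixedPoints B α := by
  let 𝒮 : Set (Set (ι → α)) := {N | IsClosed N ∧ N.Nonempty ∧ ∀ b ∈ B, ∀ f ∈ N, b ∘ f ∈ N}
  obtain ⟨N, hNS, hmin⟩ : ∃ N ⊆ S, Minimal (· ∈ 𝒮) N := by
    refine zorn_superset_nonempty 𝒮 (fun c hc hchain ⟨N₀, hN₀⟩ => ?_) S ⟨hS, hne, hinv⟩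
    have : Nonempty c := ⟨⟨N₀, hN₀⟩⟩
    refine ⟨⋂₀ c, ⟨isClosed_sInter fun N hN => (hc hN).1, ?_,
      fun b hb f hf N hN => (hc hN).2.2 b hb f (hf N hN)⟩, fun N hN => sInter_subset_of_mem hN⟩
    exact IsCompact.nonempty_sInter_of_directed_nonempty_isCompact_isClosed
      (fun N hN N' hN' => (hchain.total hN hN').elim (fun h => ⟨N, hN, subset_rfl, h⟩)
        fun h => ⟨N', hN', h, subset_rfl⟩)
      (fun N hN => (hc hN).2.1) (fun N hN => (hc hN).1.isCompact) (fun N hN => (hc hN).1)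
  obtain ⟨hNc, ⟨f, hf⟩, hNinv⟩ := hmin.prop
  refine ⟨f, hNS hf, fun i => ?_⟩
  obtain ⟨_, ⟨g, hg, rfl⟩, hm⟩ :=
    (hNc.isCompact.image (continuous_apply i)).exists_isGreatest ⟨f i, f, hf, rfl⟩
  have hfix : g i ∈ fixedPoints B α := by
    refine (Subgroup.mem_fixedPoints_iff B).2 fun b hb => le_antisymm
      (hm ⟨_, hNinv b hb g hg, rfl⟩) ?_
    simpa using hmono b hb (hm ⟨_, hNinv _ (B.inv_mem hb) g hg, rfl⟩)
  have hsub : N ⊆ N ∩ {h | h i = g i} :=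
    hmin.2 ⟨hNc.inter (isClosed_eq (continuous_apply i) continuous_const), ⟨g, hg, rfl⟩,
      fun b hb h hh => ⟨hNinv b hb h hh.1, by
        have hhi : h i = g i := hh.2
        simp only [mem_ofPred_eq, Function.comp_apply, hhi]
        exact (Subgroup.mem_fixedPoints_iff B).1 hfix b hb⟩⟩
      inter_subset_left
  rw [(hsub hf).2]
  exact hfix

theorem exists_mem_pointwiseClosure_forall_mem_fixedPoints (hcont : ∀ b ∈ B, Continuous b)
    (hmono : ∀ b ∈ B, Monotone b) : ∃ e ∈ pointwiseClosure B, ∀ x, e x ∈ fixedPoints B α :=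
  exists_forall_mem_fixedPoints hmono isClosed_closure ⟨id, id_mem_pointwiseClosure⟩
    fun _ hb _ hf => comp_mem_pointwiseClosure hcont hb hf

theorem exists_forall_apply_notMem (hcont : ∀ b ∈ B, Continuous b)
    (hmono : ∀ b ∈ B, Monotone b) {K : Set α} (hK : IsClosed K)
    (hKF : K ⊆ (fixedPoints B α)ᶜ) {P : Set α} (hP : P.Finite) : ∃ c ∈ B, ∀ p ∈ P, c p ∉ K := by
  obtain ⟨e, he, heF⟩ := exists_mem_pointwiseClosure_forall_mem_fixedPoints hcont hmono
  refine exists_mem_of_mem_pointwiseClosure (p := fun g => ∀ p ∈ P, g p ∉ K) he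
    ((eventually_all_finite hP).2 fun p _ => ?_)
  exact ((continuous_apply p).tendsto e).eventually_mem
    (hK.isOpen_compl.mem_nhds fun hp => hKF hp (heF p))

theorem exists_mem_pointwiseClosure_forall_notMem_jumpSet [DenselyOrdered α]
    (hcont : ∀ b ∈ B, Continuous b) (hmono : ∀ b ∈ B, Monotone b) {K : Set α} (hK : IsClosed K)
    (hKF : K ⊆ (fixedPoints B α)ᶜ) :
    ∃ f ∈ pointwiseClosure B, (∀ x, f x ∈ fixedPoints B α) ∧ ∀ x ∈ K, x ∉ jumpSet f := by
  obtain ⟨e, he, heF⟩ := exists_mem_pointwiseClosure_forall_mem_fixedPoints hcont hmono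
  have hFo : IsOpen (fixedPoints B α)ᶜ := (Subgroup.isClosed_fixedPoints hcont).isOpen_compl
  obtain ⟨t, -, ht, hKt⟩ := hK.isCompact.elim_finite_subcover_image
    (c := ordConnectedComponent (fixedPoints B α)ᶜ) (fun x _ => hFo.ordConnectedComponent x)
    (fun x hx => mem_biUnion hx (self_mem_ordConnectedComponent.2 (hKF hx)))
  have hP : (⋃ y ∈ t, jumpSet e ∩ ordConnectedComponent (fixedPoints B α)ᶜ y).Finite :=
    ht.biUnion fun y _ => (subsingleton_jumpSet_inter he heF inferInstance
      ordConnectedComponent_subset).finite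
  -- the jumps of `e` that `c⁻¹` could carry into `K` all lie in `P`
  obtain ⟨c, hc, hcK⟩ := exists_forall_apply_notMem hcont hmono hK hKF hP
  refine ⟨e ∘ ⇑c⁻¹, comp_perm_mem_pointwiseClosure (B.inv_mem hc) he, fun x => heF _,
    fun x hx hjump => ?_⟩
  obtain ⟨y, hyt, hxy⟩ := mem_iUnion₂.1 (hKt hx)
  have hmem : c⁻¹ x ∈ ordConnectedComponent (fixedPoints B α)ᶜ y := by
    rw [ordConnectedComponent_eq hxy]
    exact apply_mem_ordConnectedComponent hmono (B.inv_mem hc) (hKF hx)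
  have hsm := (hmono _ (B.inv_mem hc)).strictMono_of_injective (c⁻¹).injective
  have := hcK _ (mem_iUnion₂.2 ⟨y, hyt, apply_mem_jumpSet_of_mem_jumpSet_comp hsm hjump, hmem⟩)
  exact this (by simpa using hx)

theorem exists_disjoint_image_of_forall_notMem_jumpSet (hmono : ∀ b ∈ B, Monotone b)
    {f : α → α} (hf : f ∈ pointwiseClosure B) (hfF : ∀ x, f x ∈ fixedPoints B α) {K : Set α}
    (hK : IsClosed K) (hKF : K ⊆ (fixedPoints B α)ᶜ) (hKf : ∀ x ∈ K, x ∉ jumpSet f) :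
    ∃ b ∈ B, Disjoint (b '' K) K := by
  have hlr : ∀ x ∈ K, ∃ l < x, ∃ r, x < r ∧ f l = f r := fun x hx => by
    simpa [jumpSet] using hKf x hx
  choose! l hl r hr hlr using hlr
  obtain ⟨t, htK, ht, hKt⟩ := hK.isCompact.elim_finite_subcover_image
    (c := fun x => Ioo (l x) (r x)) (fun _ _ => isOpen_Ioo)
    (fun x hx => mem_biUnion hx ⟨hl x hx, hr x hx⟩)
  let U x := ordConnectedComponent Kᶜ (f (l x))
  have hU : ∀ x, U x ∈ 𝓝 (f (l x)) := fun x =>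
    ordConnectedComponent_mem_nhds.2 (hK.isOpen_compl.mem_nhds fun h => hKF h (hfF _))
  obtain ⟨b, hb, hbU⟩ := exists_mem_of_mem_pointwiseClosure hf ((eventually_all_finite ht).2
    fun x hx => (((continuous_apply (l x)).tendsto f).eventually_mem (hU x)).and
      (((continuous_apply (r x)).tendsto f).eventually_mem (hlr x (htK hx) ▸ hU x)))
  refine ⟨b, hb, disjoint_left.2 ?_⟩
  rintro _ ⟨z, hz, rfl⟩ hbz
  obtain ⟨x, hxt, hzx⟩ := mem_iUnion₂.1 (hKt hz)
  have hsm := (hmono b hb).strictMono_of_injective b.injective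
  exact ordConnectedComponent_subset (OrdConnected.out inferInstance (hbU x hxt).1
    (hbU x hxt).2 ⟨(hsm hzx.1).le, (hsm hzx.2).le⟩) hbz

theorem exists_disjoint_image [DenselyOrdered α] (hcont : ∀ b ∈ B, Continuous b)
    (hmono : ∀ b ∈ B, Monotone b) {K : Set α} (hK : IsClosed K)
    (hKF : K ⊆ (fixedPoints B α)ᶜ) : ∃ b ∈ B, Disjoint (b '' K) K :=
  let ⟨_, hf, hfF, hKf⟩ := exists_mem_pointwiseClosure_forall_notMem_jumpSet hcont hmono hK hKF
  exists_disjoint_image_of_forall_notMem_jumpSet hmono hf hfF hK hKF hKf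

end Topology

theorem stmt2_general
    (A B : Subgroup (Equiv.Perm (Icc (0:ℝ) 1)))
    (hB : ∀ g ∈ B, Continuous (⇑(g : Equiv.Perm (Icc (0:ℝ) 1))) ∧ Monotone ⇑g)
    (hsupp : ∀ a ∈ A, closure {x | a x ≠ x} ⊆ {x | ∃ b ∈ B, b x ≠ x}) :
    ⁅A, A⁆ ≤ Subgroup.closure
      {x | ∃ a₀ ∈ A, ∃ a₁ ∈ A, ∃ b₀ ∈ B, ∃ b₁ ∈ B, x = ⁅⁅a₀, b₀⁆, ⁅a₁, b₁⁆⁆} := by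
  have hcont : ∀ b ∈ B, Continuous b := fun b hb => (hB b hb).1
  have hmono : ∀ b ∈ B, Monotone b := fun b hb => (hB b hb).2
  have hsuppF : ∀ a ∈ A, closure {x | a x ≠ x} ⊆ (fixedPoints B _)ᶜ := fun a ha _ hx =>
    (Subgroup.notMem_fixedPoints_iff B).2 (hsupp a ha hx)
  rw [Subgroup.commutator_le]
  intro a ha c hc
  set K := closure {x | a x ≠ x} ∪ closure {x | c x ≠ x}
  have hK : IsClosed K := isClosed_closure.union isClosed_closure
  have hKF : K ⊆ (fixedPoints B _)ᶜ := union_subset (hsuppF a ha) (hsuppF c hc)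
  obtain ⟨b₀, hb₀, h₀⟩ := exists_disjoint_image hcont hmono hK hKF
  obtain ⟨b₁, hb₁, h₁⟩ := exists_disjoint_image hcont hmono
    (hK.union (hK.isCompact.image (hcont b₀ hb₀)).isClosed)
    (union_subset hKF (image_subset_iff.2 fun _ hx =>
      Subgroup.apply_notMem_fixedPoints B hb₀ (hKF hx)))
  exact Subgroup.subset_closure ⟨a, ha, c, hc, b₀, hb₀, b₁, hb₁,
    (Perm.commutatorElement_commutatorElement_eq_of_disjoint
      (subset_closure.trans subset_union_left) (subset_closure.trans subset_union_right)
      h₀ h₁).symm⟩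

theorem stmt2
    (A B : Subgroup (Equiv.Perm (Icc (0:ℝ) 1)))
    (hA : ∀ g ∈ A, Continuous (⇑(g : Equiv.Perm (Icc (0:ℝ) 1))) ∧ Monotone ⇑g)
    (hB : ∀ g ∈ B, Continuous (⇑(g : Equiv.Perm (Icc (0:ℝ) 1))) ∧ Monotone ⇑g)
    (hsupp : ∀ a ∈ A, closure {x | a x ≠ x} ⊆ {x | ∃ b ∈ B, b x ≠ x}) :
    ⁅A, A⁆ ≤ Subgroup.closure
      {x | ∃ a₀ ∈ A, ∃ a₁ ∈ A, ∃ b₀ ∈ B, ∃ b₁ ∈ B, x = ⁅⁅a₀, b₀⁆, ⁅a₁, b₁⁆⁆} :=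
  stmt2_general A B hB hsupp
end

section
/- Let G be a perfect subgroup of the piecewise-linear orientation-preserving homeomorphisms of [0,1] and let H be a normal subgroup of G with supt H = supt G. Then H = G. -/
open Set

/-- A permutation of `[0,1]` is piecewise linear if there is a finite partition of `[0,1]`
on whose pieces it is affine. -/
def IsPL (f : Equiv.Perm (Icc (0:ℝ) 1)) : Prop :=
  ∃ (n : ℕ) (t : Fin (n + 2) → ℝ), StrictMono t ∧ t 0 = 0 ∧ t (Fin.last (n + 1)) = 1 ∧
    ∀ i : Fin (n + 1), ∃ a b : ℝ, ∀ x : Icc (0:ℝ) 1,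
      (x : ℝ) ∈ Icc (t i.castSucc) (t i.succ) → (f x : ℝ) = a * (x : ℝ) + b

/-!
Every element of `G` is affine on either side of a global fixed point `p`, and the one-sided
slope at `p` is a homomorphism to `ℝˣ`; as `G` is perfect it is trivial, so every element of `G`
is the identity near each global fixed point. Consequently, on each orbital (a component of the
complement of the global fixed points) an element of `G` is supported in a compact subinterval,
and by piecewise linearity it meets only finitely many orbitals.

Since `H` has the same support as `G`, inside an orbital some `w ∈ H` pushes any compact
subinterval beyond any other. For `z, y ∈ G` and an orbital meeting the support of `z`, the
conjugate `w z w⁻¹` (which has the same image as `z` in `G/H`) then commutes with `y` on that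
orbital, so `⁅z, y⁆` has the same image in `G/H` as an element whose support meets fewer orbitals.
By induction on the number of these orbitals, `⁅z, y⁆` is central in `G/H` for all `y`, and since
`G/H` is perfect this makes the image of `z` central (Grün's lemma). Thus `G/H` is abelian and
perfect, hence trivial.
-/

open Filter Topology MulAction Equiv
open scoped commutatorElement

lemma Equiv.Perm.commutatorElement_apply_eq_self {α : Type*} {a b : Perm α} {O s : Set α}
    (ha : MapsTo ⇑a⁻¹ O O) (hb : MapsTo ⇑b⁻¹ O O)
    (has : ∀ x ∈ O ∩ s, a x = x) (hbs : ∀ x ∈ O \ s, b x = x) {x : α} (hx : x ∈ O) :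
    ⁅a, b⁆ x = x := by
  have hinv : ∀ {f : Perm α} {y : α}, f y = y → f⁻¹ y = y := fun h => by
    rw [Perm.inv_eq_iff_eq, h]
  simp only [commutatorElement_def, Perm.mul_apply]
  by_cases hxs : x ∈ s
  · have hy : b⁻¹ x ∈ O ∩ s := by
      refine ⟨hb hx, by_contra fun hys => hys ?_⟩
      have := hbs _ ⟨hb hx, hys⟩
      simp only [Perm.coe_inv, apply_symm_apply] at this
      exact this ▸ hxs
    rw [hinv (has _ hy), Perm.coe_inv, apply_symm_apply, has x ⟨hx, hxs⟩]
  · have hy : a⁻¹ x ∈ O \ s := by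
      refine ⟨ha hx, fun hys => hxs ?_⟩
      have := has _ ⟨ha hx, hys⟩
      simp only [Perm.coe_inv, apply_symm_apply] at this
      exact this ▸ hys
    rw [hinv (hbs x ⟨hx, hxs⟩), hbs _ hy, Perm.coe_inv, apply_symm_apply]

lemma Subgroup.mem_fixedPoints_iff_s4 {X : Type*} {G : Subgroup (Perm X)} {x : X} :
    x ∈ fixedPoints G X ↔ ∀ g ∈ G, g x = x := by
  simp [mem_fixedPoints, Subgroup.smul_def, Perm.smul_def]

lemma Equiv.Perm.continuous_of_monotone {X : Type*} [LinearOrder X] [TopologicalSpace X]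
    [OrderTopology X] {g : Perm X} (hg : Monotone g) : Continuous g :=
  ((hg.strictMono_of_injective g.injective).orderIsoOfSurjective g g.surjective).continuous

lemma Continuous.tendsto_nhdsWithin_of_mapsTo {α : Type*} [TopologicalSpace α] {f : α → α}
    (hf : Continuous f) {s : Set α} {p : α} (hp : f p = p) (hs : MapsTo f s s) :
    Tendsto f (𝓝[s] p) (𝓝[s] p) := by
  simpa [hp] using (hf.continuousWithinAt (x := p)).tendsto_nhdsWithin hs

section Orbitals

variable {X : Type*} [CompleteLinearOrder X] {G H : Subgroup (Perm X)}

variable (G) in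
/-- The largest global fixed point below `x`; for `x` not fixed by `G`, the orbital of `G`
containing `x` is `Ioo (fixBelow G x) (fixAbove G x)`. -/
noncomputable def fixBelow (x : X) : X := sSup (fixedPoints G X ∩ Iic x)

variable (G) in
noncomputable def fixAbove (x : X) : X := sInf (fixedPoints G X ∩ Ici x)

variable (G) in
/-- The orbitals of `G` meeting the support of `g`, each represented by its left end. -/
def supportOrbitals (g : Perm X) : Set X := fixBelow G '' (fixedBy X g)ᶜ

lemma fixBelow_le (x : X) : fixBelow G x ≤ x := sSup_le fun _ h => h.2

lemma le_fixAbove (x : X) : x ≤ fixAbove G x := le_sInf fun _ h => h.2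

lemma le_fixBelow {x y : X} (hy : y ∈ fixedPoints G X) (hyx : y ≤ x) : y ≤ fixBelow G x :=
  le_sSup ⟨hy, hyx⟩

lemma fixAbove_le {x y : X} (hy : y ∈ fixedPoints G X) (hxy : x ≤ y) : fixAbove G x ≤ y :=
  sInf_le ⟨hy, hxy⟩

lemma notMem_fixedPoints_of_mem_Ioo {x y : X} (hy : y ∈ Ioo (fixBelow G x) (fixAbove G x)) :
    y ∉ fixedPoints G X := fun hfix => by
  rcases le_total y x with h | h
  · exact (le_fixBelow hfix h).not_gt hy.1
  · exact (fixAbove_le hfix h).not_gt hy.2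

lemma bot_mem_fixedPoints (hG : ∀ g ∈ G, Monotone g) : (⊥ : X) ∈ fixedPoints G X :=
  Subgroup.mem_fixedPoints_iff_s4.mpr fun g hg => le_bot_iff.mp <| by
    simpa using hG g hg (bot_le : ⊥ ≤ g⁻¹ ⊥)

lemma top_mem_fixedPoints (hG : ∀ g ∈ G, Monotone g) : (⊤ : X) ∈ fixedPoints G X :=
  Subgroup.mem_fixedPoints_iff_s4.mpr fun g hg => top_le_iff.mp <| by
    simpa using hG g hg (le_top : g⁻¹ ⊤ ≤ ⊤)

lemma fixBelow_apply (hG : ∀ g ∈ G, Monotone g) {g : Perm X} (hg : g ∈ G) (x : X) :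
    fixBelow G (g x) = fixBelow G x := by
  unfold fixBelow
  congr 1
  ext y
  simp only [mem_inter_iff, mem_Iic, and_congr_right_iff]
  intro hy
  nth_rewrite 1 [← Subgroup.mem_fixedPoints_iff_s4.mp hy g hg]
  exact ((hG g hg).strictMono_of_injective g.injective).le_iff_le

lemma supportOrbitals_conj_subset (hG : ∀ g ∈ G, Monotone g) {w : Perm X} (hw : w ∈ G)
    (g : Perm X) : supportOrbitals G (w * g * w⁻¹) ⊆ supportOrbitals G g := by
  rintro _ ⟨x, hx, rfl⟩
  refine ⟨w⁻¹ x, fun h => hx ?_, by simpa using (fixBelow_apply hG hw (w⁻¹ x)).symm⟩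
  simp_all [Perm.smul_def]

lemma supportOrbitals_commutator_subset (hG : ∀ g ∈ G, Monotone g) {b : Perm X} (hb : b ∈ G)
    (a : Perm X) : supportOrbitals G ⁅a, b⁆ ⊆ supportOrbitals G a := by
  rintro _ ⟨x, hx, rfl⟩
  by_cases h : a (b⁻¹ x) = b⁻¹ x
  · refine ⟨x, fun hax => hx ?_, rfl⟩
    have : a⁻¹ (b⁻¹ x) = b⁻¹ x := by rw [Perm.inv_eq_iff_eq, h]
    simp_all [commutatorElement_def, Perm.smul_def]
  · exact ⟨b⁻¹ x, h, fixBelow_apply hG (inv_mem hb) x⟩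

variable [TopologicalSpace X] [OrderTopology X]

lemma isClosed_fixedPoints_of_monotone (hG : ∀ g ∈ G, Monotone g) :
    IsClosed (fixedPoints G X) := by
  have : fixedPoints G X = ⋂ g ∈ G, {x | g x = x} := by
    ext; simp
  rw [this]
  exact isClosed_biInter fun g hg =>
    isClosed_eq (Perm.continuous_of_monotone (hG g hg)) continuous_id

lemma fixBelow_mem (hG : ∀ g ∈ G, Monotone g) (x : X) : fixBelow G x ∈ fixedPoints G X :=
  (((isClosed_fixedPoints_of_monotone hG).inter isClosed_Iic).sSup_mem
    (s := fixedPoints G X ∩ Iic x) ⟨⊥, bot_mem_fixedPoints hG, bot_le⟩).1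

lemma fixAbove_mem (hG : ∀ g ∈ G, Monotone g) (x : X) : fixAbove G x ∈ fixedPoints G X :=
  (((isClosed_fixedPoints_of_monotone hG).inter isClosed_Ici).sInf_mem
    (s := fixedPoints G X ∩ Ici x) ⟨⊤, top_mem_fixedPoints hG, le_top⟩).1

lemma fixBelow_lt (hG : ∀ g ∈ G, Monotone g) {x : X} (hx : x ∉ fixedPoints G X) :
    fixBelow G x < x :=
  (fixBelow_le x).lt_of_ne fun h => hx (h ▸ fixBelow_mem hG x)

lemma lt_fixAbove (hG : ∀ g ∈ G, Monotone g) {x : X} (hx : x ∉ fixedPoints G X) :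
    x < fixAbove G x :=
  (le_fixAbove x).lt_of_ne fun h => hx (h ▸ fixAbove_mem hG x)

lemma fixBelow_eq_of_mem_Ioo (hG : ∀ g ∈ G, Monotone g) {x y : X}
    (hy : y ∈ Ioo (fixBelow G x) (fixAbove G x)) : fixBelow G y = fixBelow G x := by
  refine le_antisymm (not_lt.mp fun hlt => ?_) (le_fixBelow (fixBelow_mem hG x) hy.1.le)
  exact notMem_fixedPoints_of_mem_Ioo ⟨hlt, (fixBelow_le y).trans_lt hy.2⟩ (fixBelow_mem hG y)

lemma mem_Ioo_of_fixBelow_eq (hG : ∀ g ∈ G, Monotone g) {x y : X}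
    (hx : x ∉ fixedPoints G X) (hy : y ∉ fixedPoints G X) (h : fixBelow G y = fixBelow G x) :
    y ∈ Ioo (fixBelow G x) (fixAbove G x) := by
  refine ⟨h ▸ fixBelow_lt hG hy, not_le.mp fun hle => ?_⟩
  have := h ▸ le_fixBelow (fixAbove_mem hG x) hle
  exact ((this.trans (fixBelow_le x)).trans_lt (lt_fixAbove hG hx)).false

lemma mapsTo_orbital (hG : ∀ g ∈ G, Monotone g) {g : Perm X} (hg : g ∈ G) (x : X) :
    MapsTo g (Ioo (fixBelow G x) (fixAbove G x)) (Ioo (fixBelow G x) (fixAbove G x)) :=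
  fun y hy => by
    have hsm := (hG g hg).strictMono_of_injective g.injective
    have hb := Subgroup.mem_fixedPoints_iff_s4.mp (fixBelow_mem hG x) g hg
    have ha := Subgroup.mem_fixedPoints_iff_s4.mp (fixAbove_mem hG x) g hg
    exact ⟨hb ▸ hsm hy.1, ha ▸ hsm hy.2⟩

theorem exists_lt_apply_of_forall_notMem_fixedPoints (hH : ∀ h ∈ H, Monotone h) {u v : X}
    (hmove : ∀ s ∈ Icc u v, s ∉ fixedPoints H X) : ∃ w ∈ H, v < w u := by
  by_contra! hle
  set S := (fun h : Perm X => h u) '' H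
  have hu : u ∈ S := ⟨1, H.one_mem, rfl⟩
  have hS : sSup S ∈ Icc u v := ⟨le_sSup hu, sSup_le <| by rintro _ ⟨h, hh, rfl⟩; exact hle h hh⟩
  obtain ⟨h, hh, hne⟩ : ∃ h ∈ H, h (sSup S) ≠ sSup S := by
    simpa [Subgroup.mem_fixedPoints_iff_s4] using hmove _ hS
  -- some element of `H` moves `sSup S` upwards; by continuity it also moves points of `S` beyond it
  obtain ⟨h', hh', hlt⟩ : ∃ h' ∈ H, sSup S < h' (sSup S) := by
    rcases hne.lt_or_gt with hlt | hlt
    · refine ⟨h⁻¹, H.inv_mem hh, ?_⟩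
      simpa using ((hH _ (H.inv_mem hh)).strictMono_of_injective (Equiv.injective _)) hlt
    · exact ⟨h, hh, hlt⟩
  have hopen : IsOpen {x | sSup S < h' x} :=
    isOpen_lt continuous_const (Perm.continuous_of_monotone (hH h' hh'))
  obtain ⟨_, hlt', ⟨h₁, hh₁, rfl⟩⟩ :=
    mem_closure_iff.mp (sSup_mem_closure ⟨u, hu⟩) _ hopen hlt
  exact (le_sSup ⟨h' * h₁, H.mul_mem hh' hh₁, rfl⟩ : h' (h₁ u) ≤ sSup S).not_gt hlt'

theorem exists_commutator_conj_fixes_orbital (hG : ∀ g ∈ G, Monotone g)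
    (hloc : ∀ g ∈ G, ∀ p ∈ fixedPoints G X, ∀ᶠ x in 𝓝 p, g x = x)
    (hHG : H ≤ G) (hfix : fixedPoints H X = fixedPoints G X)
    {z y : Perm X} (hz : z ∈ G) (hy : y ∈ G) {x₀ : X} (hx₀ : x₀ ∉ fixedPoints G X) :
    ∃ w ∈ H, ∀ x ∈ Ioo (fixBelow G x₀) (fixAbove G x₀), ⁅w * z * w⁻¹, y⁆ x = x := by
  set a := fixBelow G x₀
  set b := fixAbove G x₀
  have hfixed : ∀ p ∈ fixedPoints G X, ∀ᶠ x in 𝓝 p, z x = x ∧ y x = x :=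
    fun p hp => (hloc z hz p hp).and (hloc y hy p hp)
  obtain ⟨u, hau, hu⟩ := (mem_nhdsGT_iff_exists_Ioo_subset' (fixBelow_lt hG hx₀)).mp
    (mem_nhdsWithin_of_mem_nhds (hfixed a (fixBelow_mem hG x₀)))
  obtain ⟨v, hvb, hv⟩ := (mem_nhdsLT_iff_exists_Ioo_subset' (lt_fixAbove hG hx₀)).mp
    (mem_nhdsWithin_of_mem_nhds (hfixed b (fixAbove_mem hG x₀)))
  -- an element of `H` pushing `u` beyond `v` conjugates the support of `z` away from that of `y`
  obtain ⟨w, hwH, hw⟩ := exists_lt_apply_of_forall_notMem_fixedPoints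
    (fun h hh => hG h (hHG hh)) (u := u) (v := v) fun s hs =>
      hfix ▸ notMem_fixedPoints_of_mem_Ioo ⟨hau.trans_le hs.1, hs.2.trans_lt hvb⟩
  have hwG := hHG hwH
  refine ⟨w, hwH, fun x hx => Perm.commutatorElement_apply_eq_self (s := Iic v)
    (mapsTo_orbital hG (inv_mem (mul_mem (mul_mem hwG hz) (inv_mem hwG))) x₀)
    (mapsTo_orbital hG (inv_mem hy) x₀) (fun x hx => ?_)
    (fun x hx => (hv ⟨not_le.mp hx.2, hx.1.2⟩).2) hx⟩
  have hwx : w⁻¹ x < u := by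
    rw [← ((hG w hwG).strictMono_of_injective w.injective).lt_iff_lt]
    simpa using hx.2.trans_lt hw
  have hzx : z (w⁻¹ x) = w⁻¹ x := (hu ⟨(mapsTo_orbital hG (inv_mem hwG) x₀ hx.1).1, hwx⟩).1
  rw [Perm.mul_apply, Perm.mul_apply, hzx, Perm.coe_inv, apply_symm_apply]

theorem mk_mem_center_of_supportOrbitals_finite [Group.IsPerfect G] [(H.subgroupOf G).Normal]
    (hG : ∀ g ∈ G, Monotone g)
    (hloc : ∀ g ∈ G, ∀ p ∈ fixedPoints G X, ∀ᶠ x in 𝓝 p, g x = x)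
    (hfin : ∀ g ∈ G, (supportOrbitals G g).Finite)
    (hHG : H ≤ G) (hfix : fixedPoints H X = fixedPoints G X) (z : G) :
    (z : G ⧸ H.subgroupOf G) ∈ Subgroup.center (G ⧸ H.subgroupOf G) := by
  induction hn : (supportOrbitals G z).ncard using Nat.strong_induction_on generalizing z with
  | _ n ih =>
  rw [← Group.IsPerfect.upperCentralSeries_eq_center _ two_ne_zero,
    Subgroup.mem_upperCentralSeries_succ_iff, Subgroup.upperCentralSeries_one]
  intro q
  obtain ⟨y, rfl⟩ := QuotientGroup.mk_surjective q
  rcases ((fixedBy X (z : Perm X))ᶜ).eq_empty_or_nonempty with hz | ⟨x₀, hx₀⟩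
  · have : z = 1 := Subtype.ext <| Perm.ext fun x => by
      simpa [Perm.smul_def] using (compl_empty_iff.mp hz).ge (mem_univ x)
    simp [this]
  have hx₀G : x₀ ∉ fixedPoints G X := fun h =>
    hx₀ (by simpa [Perm.smul_def] using Subgroup.mem_fixedPoints_iff_s4.mp h z z.2)
  obtain ⟨w, hwH, hw⟩ := exists_commutator_conj_fixes_orbital hG hloc hHG hfix z.2 y.2 hx₀G
  set w' : G := ⟨w, hHG hwH⟩
  set c : G := ⁅w' * z * w'⁻¹, y⁆
  have hc : (c : G ⧸ H.subgroupOf G) = ⁅(z : G ⧸ H.subgroupOf G), (y : G ⧸ H.subgroupOf G)⁆ := by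
    have hw' : (w' : G ⧸ H.subgroupOf G) = 1 := (QuotientGroup.eq_one_iff _).mpr hwH
    simp [c, commutatorElement_def, hw']
  rw [← hc]
  refine ih _ ?_ c rfl
  have hsub : supportOrbitals G c ⊆ supportOrbitals G z \ {fixBelow G x₀} := by
    rintro _ ⟨x, hx, rfl⟩
    refine ⟨supportOrbitals_conj_subset hG w'.2 _
      (supportOrbitals_commutator_subset hG y.2 _ ⟨x, hx, rfl⟩), fun heq => hx ?_⟩
    have hxG : x ∉ fixedPoints G X := fun h =>
      hx (by simpa [Perm.smul_def] using Subgroup.mem_fixedPoints_iff_s4.mp h c c.2)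
    have hcoe : (c : Perm X) = ⁅w * (z : Perm X) * w⁻¹, (y : Perm X)⁆ := rfl
    simpa [Perm.smul_def, hcoe] using hw x (mem_Ioo_of_fixBelow_eq hG hx₀G hxG heq)
  rw [← hn]
  exact (ncard_le_ncard hsub (hfin _ z.2).sdiff).trans_lt
    (ncard_sdiff_singleton_lt_of_mem ⟨x₀, hx₀, rfl⟩ (hfin _ z.2))

theorem eq_of_normal_of_fixedPoints_eq [Group.IsPerfect G] [(H.subgroupOf G).Normal]
    (hG : ∀ g ∈ G, Monotone g)
    (hloc : ∀ g ∈ G, ∀ p ∈ fixedPoints G X, ∀ᶠ x in 𝓝 p, g x = x)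
    (hfin : ∀ g ∈ G, (supportOrbitals G g).Finite)
    (hHG : H ≤ G) (hfix : fixedPoints H X = fixedPoints G X) : H = G := by
  have : IsMulCommutative (G ⧸ H.subgroupOf G) := ⟨⟨fun p q => by
    induction p using QuotientGroup.induction_on with | H p =>
    exact (Subgroup.mem_center_iff.mp
      (mk_mem_center_of_supportOrbitals_finite hG hloc hfin hHG hfix p) q).symm⟩⟩
  refine le_antisymm hHG fun g hg => ?_
  have : ((⟨g, hg⟩ : G) : G ⧸ H.subgroupOf G) = 1 := Subsingleton.elim _ _
  rwa [QuotientGroup.eq_one_iff, Subgroup.mem_subgroupOf] at this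

end Orbitals

lemma exists_mem_Ico_castSucc_succ {α : Type*} [LinearOrder α] {n : ℕ} (t : Fin (n + 2) → α)
    {r : α} (hr : r ∈ Ico (t 0) (t (Fin.last (n + 1)))) :
    ∃ j : Fin (n + 1), r ∈ Ico (t j.castSucc) (t j.succ) := by
  let a : ℕ → α := fun k => if hk : k < n + 2 then t ⟨k, hk⟩ else r
  have ha : ∀ (k : ℕ) (hk : k < n + 2), a k = t ⟨k, hk⟩ := fun k hk => dif_pos hk
  obtain ⟨i, hi, hri⟩ := mem_iUnion₂.mp <| Ico_subset_biUnion_Ico (n + 1) a <| by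
    rwa [ha 0 (by omega), ha (n + 1) (by omega)]
  have hi : i < n + 1 := Finset.mem_range.mp hi
  rw [ha i (by omega), ha (i + 1) (by omega)] at hri
  exact ⟨⟨i, hi⟩, hri⟩

lemma exists_mem_Ioc_castSucc_succ {α : Type*} [LinearOrder α] {n : ℕ} (t : Fin (n + 2) → α)
    {r : α} (hr : r ∈ Ioc (t 0) (t (Fin.last (n + 1)))) :
    ∃ j : Fin (n + 1), r ∈ Ioc (t j.castSucc) (t j.succ) := by
  let a : ℕ → α := fun k => if hk : k < n + 2 then t ⟨k, hk⟩ else r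
  have ha : ∀ (k : ℕ) (hk : k < n + 2), a k = t ⟨k, hk⟩ := fun k hk => dif_pos hk
  obtain ⟨i, hi, hri⟩ := mem_iUnion₂.mp <| Ioc_subset_biUnion_Ioc (n + 1) a <| by
    rwa [ha 0 (by omega), ha (n + 1) (by omega)]
  have hi : i < n + 1 := Finset.mem_range.mp hi
  rw [ha i (by omega), ha (i + 1) (by omega)] at hri
  exact ⟨⟨i, hi⟩, hri⟩

section PiecewiseLinear

open unitInterval

lemma IsPL.exists_slope_nhdsGT {g : Perm I} (hg : IsPL g) {p : I} (hp : g p = p) :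
    ∃ c : ℝ, ∀ᶠ x in 𝓝[>] p, (g x : ℝ) - p = c * (x - p) := by
  obtain ⟨n, t, -, h0, h1, haff⟩ := hg
  rcases p.2.2.lt_or_eq with hp1 | hp1
  · obtain ⟨j, hj⟩ := exists_mem_Ico_castSucc_succ t (by rw [h0, h1]; exact ⟨p.2.1, hp1⟩)
    obtain ⟨c, d, hcd⟩ := haff j
    have hpj := hcd p ⟨hj.1, hj.2.le⟩
    rw [hp] at hpj
    refine ⟨c, ?_⟩
    filter_upwards [self_mem_nhdsWithin, mem_nhdsWithin_of_mem_nhds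
      ((continuous_subtype_val.tendsto p).eventually_lt_const hj.2)] with x (hpx : p < x) hxt
    rw [hcd x ⟨hj.1.trans hpx.le, hxt.le⟩]
    linear_combination -hpj
  · have : IsMax p := fun x _ => Subtype.coe_le_coe.mp (hp1 ▸ x.2.2)
    simp [this.Ioi_eq]

lemma IsPL.exists_slope_nhdsLT {g : Perm I} (hg : IsPL g) {p : I} (hp : g p = p) :
    ∃ c : ℝ, ∀ᶠ x in 𝓝[<] p, (g x : ℝ) - p = c * (x - p) := by
  obtain ⟨n, t, -, h0, h1, haff⟩ := hg
  rcases p.2.1.eq_or_lt with hp0 | hp0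
  · have : IsMin p := fun x _ => Subtype.coe_le_coe.mp (hp0 ▸ x.2.1)
    simp [this.Iio_eq]
  · obtain ⟨j, hj⟩ := exists_mem_Ioc_castSucc_succ t (by rw [h0, h1]; exact ⟨hp0, p.2.2⟩)
    obtain ⟨c, d, hcd⟩ := haff j
    have hpj := hcd p ⟨hj.1.le, hj.2⟩
    rw [hp] at hpj
    refine ⟨c, ?_⟩
    filter_upwards [self_mem_nhdsWithin, mem_nhdsWithin_of_mem_nhds
      ((continuous_subtype_val.tendsto p).eventually_const_lt hj.1)] with x (hxp : x < p) htx
    rw [hcd x ⟨htx.le, (Subtype.coe_le_coe.mpr hxp.le).trans hj.2⟩]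
    linear_combination -hpj

theorem eventually_apply_eq_of_isPerfect {G : Subgroup (Perm I)} [Group.IsPerfect G]
    {l : Filter I} {p : I} (hp : ∀ᶠ x in l, x ≠ p) (htend : ∀ g ∈ G, Tendsto g l l)
    (hslope : ∀ g ∈ G, ∃ c : ℝ, ∀ᶠ x in l, (g x : ℝ) - p = c * (x - p))
    {g : Perm I} (hg : g ∈ G) : ∀ᶠ x in l, g x = x := by
  rcases l.eq_or_neBot with rfl | hl
  · exact eventually_bot
  choose! slope hslope using hslope
  have huniq : ∀ {g : Perm I} {c : ℝ}, g ∈ G →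
      (∀ᶠ x in l, (g x : ℝ) - p = c * (x - p)) → c = slope g := by
    intro g c hg hc
    obtain ⟨x, hxp, hx₁, hx₂⟩ := (hp.and (hc.and (hslope g hg))).exists
    exact mul_right_cancel₀ (sub_ne_zero.mpr (Subtype.coe_injective.ne hxp)) (hx₁.symm.trans hx₂)
  -- the slope at `p` is a homomorphism to a commutative group, hence trivial on `G`
  let φ : G →* ℝ :=
    { toFun := fun g => slope g
      map_one' := (huniq G.one_mem (by simp)).symm
      map_mul' := fun g h => (huniq (mul_mem g.2 h.2) <| by
        filter_upwards [htend h h.2 (hslope g g.2), hslope h h.2] with x hgx hhx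
        rw [mem_preimage, mem_ofPred_eq] at hgx
        rw [Perm.mul_apply]
        linear_combination hgx + slope g * hhx).symm }
  have hφ : slope g = 1 := by
    have := Abelianization.commutator_subset_ker φ.toHomUnits
      (Group.IsPerfect.mem_commutator (g := ⟨g, hg⟩))
    simpa [Units.ext_iff, φ] using this
  filter_upwards [hslope g hg] with x hx
  rw [hφ, one_mul, sub_left_inj] at hx
  exact Subtype.ext hx

theorem eventually_nhds_apply_eq_of_isPerfect {G : Subgroup (Perm I)} [Group.IsPerfect G]
    (hG : ∀ g ∈ G, Monotone g ∧ IsPL g) (g : Perm I) (hg : g ∈ G) (p : I)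
    (hp : p ∈ fixedPoints G I) : ∀ᶠ x in 𝓝 p, g x = x := by
  have hfix := Subgroup.mem_fixedPoints_iff_s4.mp hp
  have hsm : ∀ g ∈ G, StrictMono g := fun g hg => (hG g hg).1.strictMono_of_injective g.injective
  have hcont : ∀ g ∈ G, Continuous g := fun g hg => Perm.continuous_of_monotone (hG g hg).1
  rw [← nhdsNE_sup_pure, ← nhdsLT_sup_nhdsGT]
  refine ⟨⟨?_, ?_⟩, hfix g hg⟩
  · refine eventually_apply_eq_of_isPerfect
      (eventually_nhdsWithin_of_forall fun x hx => ne_of_lt hx) (fun g hg => ?_)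
      (fun g hg => (hG g hg).2.exists_slope_nhdsLT (hfix g hg)) hg
    exact (hcont g hg).tendsto_nhdsWithin_of_mapsTo (hfix g hg)
      fun x (hx : x < p) => (hfix g hg ▸ hsm g hg hx : g x < p)
  · refine eventually_apply_eq_of_isPerfect
      (eventually_nhdsWithin_of_forall fun x hx => ne_of_gt hx) (fun g hg => ?_)
      (fun g hg => (hG g hg).2.exists_slope_nhdsGT (hfix g hg)) hg
    exact (hcont g hg).tendsto_nhdsWithin_of_mapsTo (hfix g hg)
      fun x (hx : p < x) => (hfix g hg ▸ hsm g hg hx : p < g x)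

theorem exists_partition_point_mem_orbital {G : Subgroup (Perm I)} (hG : ∀ g ∈ G, Monotone g)
    (hloc : ∀ g ∈ G, ∀ p ∈ fixedPoints G I, ∀ᶠ x in 𝓝 p, g x = x) {g : Perm I} (hg : g ∈ G)
    {n : ℕ} {t : Fin (n + 2) → ℝ} (h0 : t 0 = 0) (h1 : t (Fin.last (n + 1)) = 1)
    (haff : ∀ i : Fin (n + 1), ∃ c d : ℝ, ∀ x : I,
      (x : ℝ) ∈ Icc (t i.castSucc) (t i.succ) → (g x : ℝ) = c * x + d)
    {x : I} (hx : g x ≠ x) : ∃ i, ((fixBelow G x : I) : ℝ) < t i ∧ t i < (fixAbove G x : I) := by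
  by_contra! hno
  have hxG : x ∉ fixedPoints G I := fun h => hx (Subgroup.mem_fixedPoints_iff_s4.mp h g hg)
  set a := fixBelow G x
  set b := fixAbove G x
  have hax : a < x := fixBelow_lt hG hxG
  have hxb : (x : ℝ) < b := lt_fixAbove hG hxG
  obtain ⟨j, hj⟩ :=
    exists_mem_Ico_castSucc_succ t (by rw [h0, h1]; exact ⟨x.2.1, hxb.trans_le b.2.2⟩)
  obtain ⟨c, d, hcd⟩ := haff j
  -- with no partition point inside the orbital `(a, b)`, it lies in a single piece
  have hja : t j.castSucc ≤ a := not_lt.mp fun h => (hno _ h).not_gt (hj.1.trans_lt hxb)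
  have hbj : (b : ℝ) ≤ t j.succ := hno _ ((Subtype.coe_lt_coe.mpr hax).trans hj.2)
  have hpiece : ∀ y : I, a ≤ y → y ≤ x → (g y : ℝ) = c * y + d := fun y h1 h2 =>
    hcd y ⟨hja.trans h1, ((Subtype.coe_le_coe.mpr h2).trans hxb.le).trans hbj⟩
  have : (𝓝[>] a).NeBot := nhdsGT_neBot_of_exists_gt ⟨x, hax⟩
  obtain ⟨y, ⟨hay, hyx⟩, hgy⟩ : ∃ y ∈ Ioo a x, g y = y :=
    ((show ∀ᶠ y in 𝓝[>] a, y ∈ Ioo a x from Ioo_mem_nhdsGT hax).and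
      (mem_nhdsWithin_of_mem_nhds (hloc g hg a (fixBelow_mem hG x)))).exists
  have ea := hpiece a le_rfl hax.le
  have ey := hpiece y hay.le hyx.le
  have hga : g a = a := Subgroup.mem_fixedPoints_iff_s4.mp (fixBelow_mem hG x) g hg
  rw [hga] at ea
  rw [hgy] at ey
  -- an affine map fixing the two points `a < y` is the identity
  have hc : c = 1 := by
    have : (c - 1) * ((y : ℝ) - a) = 0 := by linear_combination ea - ey
    exact sub_eq_zero.mp ((mul_eq_zero.mp this).resolve_right
      (sub_ne_zero.mpr (Subtype.coe_injective.ne hay.ne')))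
  exact hx (Subtype.ext (by rw [hpiece x hax.le le_rfl, hc]; linear_combination -ea - (a : ℝ) * hc))

theorem finite_supportOrbitals {G : Subgroup (Perm I)} (hG : ∀ g ∈ G, Monotone g)
    (hloc : ∀ g ∈ G, ∀ p ∈ fixedPoints G I, ∀ᶠ x in 𝓝 p, g x = x) {g : Perm I} (hg : g ∈ G)
    (hpl : IsPL g) : (supportOrbitals G g).Finite := by
  obtain ⟨n, t, -, h0, h1, haff⟩ := hpl
  refine (finite_range fun i => fixBelow G (projIcc 0 1 zero_le_one (t i))).subset ?_
  rintro _ ⟨x, hx, rfl⟩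
  obtain ⟨i, hi⟩ := exists_partition_point_mem_orbital hG hloc hg h0 h1 haff
    (by simpa [Perm.smul_def] using hx)
  refine ⟨i, fixBelow_eq_of_mem_Ioo hG ?_⟩
  have ht : t i ∈ Icc (0 : ℝ) 1 :=
    ⟨(fixBelow G x).2.1.trans hi.1.le, hi.2.le.trans (fixAbove G x).2.2⟩
  rw [projIcc_of_mem _ ht]
  exact hi

end PiecewiseLinear

theorem stmt4
    (G H : Subgroup (Equiv.Perm (Icc (0:ℝ) 1)))
    (hG : ∀ g ∈ G, Continuous (⇑(g : Equiv.Perm (Icc (0:ℝ) 1))) ∧ Monotone ⇑g ∧ IsPL g)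
    (hperf : G = ⁅G, G⁆)
    (hHG : H ≤ G) (hnorm : ∀ g ∈ G, ∀ h ∈ H, g⁻¹ * h * g ∈ H)
    (hsupp : {x | ∃ h ∈ H, h x ≠ x} = {x | ∃ g ∈ G, g x ≠ x}) :
    H = G := by
  have hPL : ∀ g ∈ G, Monotone g ∧ IsPL g := fun g hg => (hG g hg).2
  have hmono : ∀ g ∈ G, Monotone g := fun g hg => (hPL g hg).1
  have : Group.IsPerfect G := Subgroup.isPerfect_iff.mpr hperf.symm
  have : (H.subgroupOf G).Normal := (Subgroup.normal_subgroupOf_iff hHG).mpr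
    fun h k hh hk => by simpa using hnorm k⁻¹ (inv_mem hk) h hh
  have hloc := eventually_nhds_apply_eq_of_isPerfect hPL
  have hfix : fixedPoints H (Icc (0:ℝ) 1) = fixedPoints G (Icc (0:ℝ) 1) := by
    ext x
    simpa [Subgroup.mem_fixedPoints_iff_s4] using congrArg (x ∉ ·) hsupp
  exact eq_of_normal_of_fixedPoints_eq hmono hloc
    (fun g hg => finite_supportOrbitals hmono hloc hg (hPL g hg).2) hHG hfix
end

section
/- Suppose a₀, a₁ are orientation-preserving homeomorphisms of [0,1] with supports supt(aᵢ) = (sᵢ, tᵢ), where s₀ < s₁ < t₀ < t₁ and t₀ a₁ ≤ s₁ a₀ (homeomorphisms acting on the right). Then a₀ and a₁ satisfy the relation [a₀^{a₁}, a₁^{a₀}] = 1, i.e. the conjugates a₀^{a₁} and a₁^{a₀} commute. -/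
open Set

namespace Equiv.Perm

variable {α : Type*}

theorem conj_apply_ne_iff (f g : Perm α) (x : α) :
    (g * f * g⁻¹) x ≠ x ↔ f (g⁻¹ x) ≠ g⁻¹ x := by
  rw [mul_apply, mul_apply, Ne, Ne, ← eq_inv_iff_eq]

variable [Preorder α] {f g : Perm α}

theorem lt_apply_of_conj_apply_ne (hg : StrictMono g) {t : α} (hf : ∀ y, f y ≠ y → y < t)
    {x : α} (hx : (g * f * g⁻¹) x ≠ x) : x < g t := by
  simpa using hg (hf _ ((conj_apply_ne_iff f g x).mp hx))

theorem apply_lt_of_conj_apply_ne (hg : StrictMono g) {s : α} (hf : ∀ y, f y ≠ y → s < y)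
    {x : α} (hx : (g * f * g⁻¹) x ≠ x) : g s < x := by
  simpa using hg (hf _ ((conj_apply_ne_iff f g x).mp hx))

end Equiv.Perm

theorem stmt7_general
    (a₀ a₁ : Equiv.Perm (Icc (0:ℝ) 1))
    (h₀m : StrictMono ⇑a₀) (h₁m : StrictMono ⇑a₁)
    (s₀ t₀ s₁ t₁ : Icc (0:ℝ) 1)
    (hsupp₀ : {x | a₀ x ≠ x} = {x | s₀ < x ∧ x < t₀})
    (hsupp₁ : {x | a₁ x ≠ x} = {x | s₁ < x ∧ x < t₁})
    (hle : a₁ t₀ ≤ a₀ s₁) :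
    Commute (a₁ * a₀ * a₁⁻¹) (a₀ * a₁ * a₀⁻¹) := by
  refine Equiv.Perm.Disjoint.commute fun x => or_iff_not_imp_left.mpr fun h₀ => ?_
  by_contra h₁
  have hlt : x < a₁ t₀ :=
    Equiv.Perm.lt_apply_of_conj_apply_ne h₁m (fun y hy => (hsupp₀.subset hy).2) h₀
  have hgt : a₀ s₁ < x :=
    Equiv.Perm.apply_lt_of_conj_apply_ne h₀m (fun y hy => (hsupp₁.subset hy).1) h₁
  exact (hlt.trans_le hle).not_gt hgt

/-- If `a₀, a₁` are orientation-preserving homeomorphisms of `[0,1]` with supports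
`(s₀,t₀)`, `(s₁,t₁)`, `s₀ < s₁ < t₀ < t₁` and `t₀ a₁ ≤ s₁ a₀` (right action), then the
right-action conjugates `a₀^{a₁}` and `a₁^{a₀}` commute.  In terms of the usual
(left-composition) group structure on permutations, `a₀^{a₁} = a₁ * a₀ * a₁⁻¹`. -/
theorem stmt7
    (a₀ a₁ : Equiv.Perm (Icc (0:ℝ) 1))
    (h₀c : Continuous ⇑a₀) (h₁c : Continuous ⇑a₁)
    (h₀m : StrictMono ⇑a₀) (h₁m : StrictMono ⇑a₁)
    (s₀ t₀ s₁ t₁ : Icc (0:ℝ) 1)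
    (hs : s₀ < s₁) (hst : s₁ < t₀) (ht : t₀ < t₁)
    (hsupp₀ : {x | a₀ x ≠ x} = {x | s₀ < x ∧ x < t₀})
    (hsupp₁ : {x | a₁ x ≠ x} = {x | s₁ < x ∧ x < t₁})
    (hle : a₁ t₀ ≤ a₀ s₁) :
    Commute (a₁ * a₀ * a₁⁻¹) (a₀ * a₁ * a₀⁻¹) :=
  stmt7_general a₀ a₁ h₀m h₁m s₀ t₀ s₁ t₁ hsupp₀ hsupp₁ hle
end

section
/- Let G be a group of homeomorphisms of an open interval J ⊆ ℝ acting on J, and suppose the action is locally dense in the sense that {supt(g) ∩ J : g ∈ G} forms a base for the topology of J. Then any continuous monotone G-equivariant surjection ψ : J → J is the identity map. -/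
open Set

/-- If a group `G` of orientation-preserving homeomorphisms of an open interval
`J = (a,b)` acts locally densely (the supports of elements form a base of the topology),
then every continuous monotone `G`-equivariant surjection `ψ : J → J` is the identity. -/
theorem stmt16 (a b : ℝ) (hab : a < b)
    (G : Subgroup (Equiv.Perm (Ioo a b)))
    (hG : ∀ g ∈ G, Continuous (⇑(g : Equiv.Perm (Ioo a b))) ∧ StrictMono ⇑g)
    (hdense : ∀ x : Ioo a b, ∀ U : Set (Ioo a b), IsOpen U → x ∈ U →
      ∃ g ∈ G, g x ≠ x ∧ {y | g y ≠ y} ⊆ U)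
    (ψ : Ioo a b → Ioo a b)
    (hψc : Continuous ψ) (hψm : Monotone ψ) (hψs : Function.Surjective ψ)
    (hψeq : ∀ g ∈ G, ∀ x, ψ (g x) = g (ψ x)) :
    ∀ x, ψ x = x := by
  intro x
  by_contra h
  rcases lt_or_gt_of_ne h with hlt | hgt
  · -- ψ x < x : take U = {y | y < x}
    have hU : IsOpen ({y : Ioo a b | (y : ℝ) < (x : ℝ)}) :=
      isOpen_Iio.preimage continuous_subtype_val
    have hmem : ψ x ∈ {y : Ioo a b | (y : ℝ) < (x : ℝ)} := hlt
    obtain ⟨g, hgG, hgm, hsupp⟩ := hdense (ψ x) _ hU hmem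
    have hx : g x = x := by
      by_contra hx
      exact absurd (hsupp hx) (lt_irrefl (x : ℝ))
    have := hψeq g hgG x
    rw [hx] at this
    exact hgm this.symm
  · -- x < ψ x : take U = {y | x < y}
    have hU : IsOpen ({y : Ioo a b | (x : ℝ) < (y : ℝ)}) :=
      isOpen_Ioi.preimage continuous_subtype_val
    have hmem : ψ x ∈ {y : Ioo a b | (x : ℝ) < (y : ℝ)} := hgt
    obtain ⟨g, hgG, hgm, hsupp⟩ := hdense (ψ x) _ hU hmem
    have hx : g x = x := by
      by_contra hx
      exact absurd (hsupp hx) (lt_irrefl (x : ℝ))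
    have := hψeq g hgG x
    rw [hx] at this
    exact hgm this.symm
end

section
/- In any group, for elements a₀, a₁, b with the property that (a₁⁻¹)^b and (a₀⁻¹)^{b⁻¹} commute with each other and with both a₀ and a₁, one has [[b⁻¹, a₀], [b, a₁]] = [a₀, a₁]. -/
/-- Group identity: if `(a₁⁻¹)^b` and `(a₀⁻¹)^{b⁻¹}` commute with each other and with
`a₀` and `a₁`, then `[[b⁻¹,a₀],[b,a₁]] = [a₀,a₁]` (with `x^y = y⁻¹xy`,
`[x,y] = x⁻¹y⁻¹xy`). -/
theorem stmt18 {G : Type*} [Group G] (a₀ a₁ b c₀ c₁ : G)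
    (hc₀ : c₀ = b * a₀⁻¹ * b⁻¹) (hc₁ : c₁ = b⁻¹ * a₁⁻¹ * b)
    (h1 : c₁ * c₀ = c₀ * c₁)
    (h2 : c₁ * a₀ = a₀ * c₁) (h3 : c₀ * a₁ = a₁ * c₀)
    (h4 : c₀ * a₀ = a₀ * c₀) (h5 : c₁ * a₁ = a₁ * c₁) :
    ((b⁻¹)⁻¹ * a₀⁻¹ * b⁻¹ * a₀)⁻¹ * (b⁻¹ * a₁⁻¹ * b * a₁)⁻¹ *
        ((b⁻¹)⁻¹ * a₀⁻¹ * b⁻¹ * a₀) * (b⁻¹ * a₁⁻¹ * b * a₁) =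
      a₀⁻¹ * a₁⁻¹ * a₀ * a₁ := by
  have e0 : (b⁻¹)⁻¹ * a₀⁻¹ * b⁻¹ * a₀ = c₀ * a₀ := by rw [hc₀]; group
  have e1 : b⁻¹ * a₁⁻¹ * b * a₁ = c₁ * a₁ := by rw [hc₁]
  rw [e0, e1]
  have k1 : c₀⁻¹ * a₁⁻¹ = a₁⁻¹ * c₀⁻¹ := ((show Commute c₀ a₁ from h3).inv_left.inv_right).eq
  have k2 : c₁⁻¹ * c₀ = c₀ * c₁⁻¹ := ((show Commute c₁ c₀ from h1).inv_left).eq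
  have k3 : c₁⁻¹ * a₀ = a₀ * c₁⁻¹ := ((show Commute c₁ a₀ from h2).inv_left).eq
  calc (c₀ * a₀)⁻¹ * (c₁ * a₁)⁻¹ * (c₀ * a₀) * (c₁ * a₁)
      = a₀⁻¹ * (c₀⁻¹ * a₁⁻¹) * (c₁⁻¹ * c₀) * (a₀ * c₁) * a₁ := by group
    _ = a₀⁻¹ * (a₁⁻¹ * c₀⁻¹) * (c₀ * c₁⁻¹) * (a₀ * c₁) * a₁ := by rw [k1, k2]
    _ = a₀⁻¹ * a₁⁻¹ * (c₀⁻¹ * c₀) * (c₁⁻¹ * a₀) * c₁ * a₁ := by group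
    _ = a₀⁻¹ * a₁⁻¹ * (c₀⁻¹ * c₀) * (a₀ * c₁⁻¹) * c₁ * a₁ := by rw [k3]
    _ = a₀⁻¹ * a₁⁻¹ * a₀ * a₁ := by group
end
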